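/- arXiv:1807.08777 — 3 statements merged into one kernel-verified Lean document; each statement's English description precedes it below -/
import Mathlib

section
/- Let p be an odd prime and let d be the multiplicative order of 2 modulo p. For the length-k Cunningham chain pattern of the first kind f_i(x) = 2^{i-1}·x + (2^{i-1} - 1), the number of residues x mod p forbidden by the pattern (i.e., residues x such that p divides some f_i(x)) is exactly min(k, d). -/
/-!
Since `2` is invertible mod `p`, the `i`-th member of the pattern vanishes exactly at
`x = 2⁻¹ ^ (i - 1) - 1`, so the forbidden residues are a translate of the first `k` powers
of `2⁻¹`. Those powers repeat with period `orderOf 2⁻¹ = orderOf 2` and are pairwise distinct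
within one period.
-/

open Finset

theorem orderOf_inv₀ {G₀ : Type*} [GroupWithZero G₀] (a : G₀) : orderOf a⁻¹ = orderOf a := by
  simp [orderOf_eq_orderOf_iff, inv_pow]

theorem card_image_range_pow {M : Type*} [Monoid M] [DecidableEq M] {x : M} (hx : IsOfFinOrder x)
    (k : ℕ) : ((range k).image (x ^ ·)).card = min k (orderOf x) := by
  have himage : (range k).image (x ^ ·) = (range (min k (orderOf x))).image (x ^ ·) := by
    refine Subset.antisymm ?_ (image_subset_image (range_subset_range.2 (min_le_left _ _)))
    simp only [subset_iff, mem_image, mem_range, forall_exists_index, and_imp,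
      forall_apply_eq_imp_iff₂]
    exact fun j hj => ⟨j % orderOf x,
      lt_min ((Nat.mod_le _ _).trans_lt hj) (Nat.mod_lt _ hx.orderOf_pos), pow_mod_orderOf x j⟩
  rw [himage, card_image_of_injOn, card_range]
  exact pow_injOn_Iio_orderOf.mono fun j hj => (lt_min_iff.1 (mem_range.1 hj)).2

section Field

variable {F : Type*} [Field F]

theorem pow_mul_add_pow_sub_one_eq_zero_iff {a : F} (ha : a ≠ 0) (n : ℕ) (x : F) :
    a ^ n * x + (a ^ n - 1) = 0 ↔ x = a⁻¹ ^ n - 1 := by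
  have hinv : a ^ n * a⁻¹ ^ n = 1 := by rw [← mul_pow, mul_inv_cancel₀ ha, one_pow]
  constructor
  · intro h
    linear_combination a⁻¹ ^ n * h - (x + 1) * hinv
  · rintro rfl
    linear_combination hinv

theorem filter_exists_pow_mul_add_pow_sub_one_eq_zero [Fintype F] [DecidableEq F] {a : F}
    (ha : a ≠ 0) (k : ℕ)
    [DecidablePred fun x : F => ∃ i ∈ Icc 1 k, a ^ (i - 1) * x + (a ^ (i - 1) - 1) = 0] :
    (univ : Finset F).filter (fun x => ∃ i ∈ Icc 1 k, a ^ (i - 1) * x + (a ^ (i - 1) - 1) = 0)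
      = ((range k).image (a⁻¹ ^ ·)).image (· - 1) := by
  ext x
  simp only [pow_mul_add_pow_sub_one_eq_zero_iff ha, mem_filter, mem_univ, true_and, mem_Icc,
    image_image, mem_image, mem_range, Function.comp_apply]
  constructor
  · rintro ⟨i, ⟨hi, hik⟩, rfl⟩
    exact ⟨i - 1, by omega, rfl⟩
  · rintro ⟨j, hj, rfl⟩
    exact ⟨j + 1, by omega, rfl⟩

end Field

open Classical in
theorem cunningham_forbidden_count_general (p : ℕ) [Fact p.Prime] (hodd : p ≠ 2)
    (k : ℕ) (d : ℕ) (hd : d = orderOf (2 : ZMod p)) :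
    ((Finset.univ : Finset (ZMod p)).filter (fun x =>
      ∃ i ∈ Finset.Icc 1 k,
        (2 : ZMod p) ^ (i - 1) * x + ((2 : ZMod p) ^ (i - 1) - 1) = 0)).card
      = min k d := by
  have h2 : (2 : ZMod p) ≠ 0 := Ring.two_ne_zero (by rwa [ZMod.ringChar_zmod_n])
  have hfin : IsOfFinOrder (2 : ZMod p)⁻¹ :=
    isOfFinOrder_iff_pow_eq_one.2 ⟨p - 1, Nat.sub_pos_of_lt (Fact.out : p.Prime).one_lt,
      ZMod.pow_card_sub_one_eq_one (inv_ne_zero h2)⟩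
  rw [filter_exists_pow_mul_add_pow_sub_one_eq_zero h2,
    card_image_of_injective _ sub_left_injective, card_image_range_pow hfin, orderOf_inv₀, hd]

open Classical in
theorem cunningham_forbidden_count (p : ℕ) [Fact p.Prime] (hodd : p ≠ 2)
    (k : ℕ) (hk : 1 ≤ k) (d : ℕ) (hd : d = orderOf (2 : ZMod p)) :
    ((Finset.univ : Finset (ZMod p)).filter (fun x =>
      ∃ i ∈ Finset.Icc 1 k,
        (2 : ZMod p) ^ (i - 1) * x + ((2 : ZMod p) ^ (i - 1) - 1) = 0)).card
      = min k d :=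
  cunningham_forbidden_count_general p hodd k d hd
end

section
/- If x is a nonnegative integer such that 6x+1, 12x+1, and 18x+1 are all prime, then the product n = (6x+1)(12x+1)(18x+1) is a Carmichael number, i.e., n is composite, squarefree, and for every prime p dividing n, p - 1 divides n - 1 (assuming x ≥ 1). -/
/-! Every prime factor `p` of `n = (6x+1)(12x+1)(18x+1)` has `p - 1 ∈ {6x, 12x, 18x}`, all of which
divide `36x`, while expanding the product gives `n - 1 = 36x (36x² + 11x + 1)`. -/

namespace Nat

theorem squarefree_mul_mul_of_prime {p q r : ℕ} (hp : p.Prime) (hq : q.Prime) (hr : r.Prime)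
    (hpq : p ≠ q) (hpr : p ≠ r) (hqr : q ≠ r) : Squarefree (p * q * r) := by
  have hpq' : Coprime p q := (coprime_primes hp hq).2 hpq
  have hpqr : Coprime (p * q) r :=
    Coprime.mul_left ((coprime_primes hp hr).2 hpr) ((coprime_primes hq hr).2 hqr)
  exact (squarefree_mul hpqr).2
    ⟨(squarefree_mul hpq').2 ⟨hp.squarefree, hq.squarefree⟩, hr.squarefree⟩

theorem Prime.eq_or_eq_or_eq_of_dvd_mul_mul {ℓ p q r : ℕ} (hℓ : ℓ.Prime) (hp : p.Prime)
    (hq : q.Prime) (hr : r.Prime) (h : ℓ ∣ p * q * r) : ℓ = p ∨ ℓ = q ∨ ℓ = r := by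
  rcases hℓ.dvd_mul.1 h with hpq | hℓr
  · rcases hℓ.dvd_mul.1 hpq with hℓp | hℓq
    · exact .inl ((prime_dvd_prime_iff_eq hℓ hp).1 hℓp)
    · exact .inr (.inl ((prime_dvd_prime_iff_eq hℓ hq).1 hℓq))
  · exact .inr (.inr ((prime_dvd_prime_iff_eq hℓ hr).1 hℓr))

end Nat

theorem chernick_product_sub_one (x : ℕ) :
    (6 * x + 1) * (12 * x + 1) * (18 * x + 1) - 1 = 36 * x * (36 * x ^ 2 + 11 * x + 1) := by
  rw [show (6 * x + 1) * (12 * x + 1) * (18 * x + 1) = 36 * x * (36 * x ^ 2 + 11 * x + 1) + 1 by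
    ring, Nat.add_sub_cancel]

theorem chernick_factor_sub_one_dvd {x k : ℕ} (hk : k ∣ 36) :
    (k * x + 1) - 1 ∣ (6 * x + 1) * (12 * x + 1) * (18 * x + 1) - 1 := by
  rw [Nat.add_sub_cancel, chernick_product_sub_one]
  exact Dvd.dvd.mul_right (mul_dvd_mul_right hk x) _

/-- Chernick's theorem: if `6x+1`, `12x+1`, `18x+1` are all prime (`x ≥ 1`),
then `n = (6x+1)(12x+1)(18x+1)` is a Carmichael number: composite,
squarefree, and `p - 1 ∣ n - 1` for every prime `p ∣ n`. -/
theorem chernick_carmichael (x : ℕ) (hx : 1 ≤ x)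
    (h1 : Nat.Prime (6 * x + 1)) (h2 : Nat.Prime (12 * x + 1))
    (h3 : Nat.Prime (18 * x + 1)) :
    ¬ Nat.Prime ((6 * x + 1) * (12 * x + 1) * (18 * x + 1)) ∧
    1 < (6 * x + 1) * (12 * x + 1) * (18 * x + 1) ∧
    Squarefree ((6 * x + 1) * (12 * x + 1) * (18 * x + 1)) ∧
    ∀ p : ℕ, p.Prime → p ∣ (6 * x + 1) * (12 * x + 1) * (18 * x + 1) →
      (p - 1) ∣ ((6 * x + 1) * (12 * x + 1) * (18 * x + 1) - 1) := by
  refine ⟨Nat.not_prime_mul (one_lt_mul_of_le_of_lt h1.one_le h2.one_lt).ne' h3.ne_one, ?_,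
    Nat.squarefree_mul_mul_of_prime h1 h2 h3 (by omega) (by omega) (by omega), ?_⟩
  · exact one_lt_mul_of_le_of_lt (one_le_mul h1.one_le h2.one_le) h3.one_lt
  · intro p hp hpn
    rcases hp.eq_or_eq_or_eq_of_dvd_mul_mul h1 h2 h3 hpn with rfl | rfl | rfl <;>
      exact chernick_factor_sub_one_dvd (by norm_num)
end

section
/- The integers p, 2p+1, 4p+3, 8p+7, 16p+15, 32p+31, 64p+63, 128p+127, 256p+255, 512p+511, 1024p+1023, 2048p+2047, 4096p+4095, 8192p+8191, 16384p+16383 are all prime for p = 9061621195846584 2219 (i.e., p = 90616211958465842219); that is, p starts a Cunningham chain of the first kind of length 15. -/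
set_option maxRecDepth 20000


def powModAux : ℕ → ℕ → ℕ → ℕ → ℕ
  | 0, _, _, m => 1 % m
  | f + 1, a, n, m =>
    if n = 0 then 1 % m
    else
      let r := powModAux f (a * a % m) (n / 2) m
      if n % 2 = 1 then r * a % m else r

theorem powModAux_eq : ∀ (f a n m : ℕ), n < 2 ^ f → powModAux f a n m = a ^ n % m := by
  intro f
  induction f with
  | zero =>
    intro a n m h
    interval_cases n
    simp [powModAux]
  | succ f ih =>
    intro a n m h
    by_cases hn : n = 0
    · subst hn; simp [powModAux]
    · have hp : (2 : ℕ) ^ (f + 1) = 2 * 2 ^ f := by ring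
      have hlt : n / 2 < 2 ^ f := by omega
      have key : (a * a) ^ (n / 2) = a ^ (2 * (n / 2)) := by
        rw [two_mul, pow_add, mul_pow]
      simp only [powModAux, hn, if_false]
      rw [ih _ _ _ hlt, ← Nat.pow_mod, key]
      rcases Nat.mod_two_eq_zero_or_one n with h2 | h2
      · have hn2 : 2 * (n / 2) = n := by omega
        rw [h2, hn2]
        norm_num
      · have hn2 : 2 * (n / 2) + 1 = n := by omega
        rw [h2, if_pos rfl, Nat.mod_mul_mod, ← pow_succ, hn2]


theorem prime_of_cert (p a : ℕ) (hp : 2 ≤ p) (L : List ℕ)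
    (hlt : p - 1 < 2 ^ 100)
    (hL : ∀ q ∈ L, q.Prime)
    (hprod : L.prod = p - 1)
    (h1 : powModAux 100 a (p - 1) p = 1)
    (h2 : ∀ q ∈ L, powModAux 100 a ((p - 1) / q) p ≠ 1) : p.Prime := by
  haveI : NeZero p := ⟨by omega⟩
  haveI : Fact (1 < p) := ⟨by omega⟩
  have key : ∀ n : ℕ, ((a : ZMod p)) ^ n = ((a ^ n % p : ℕ) : ZMod p) := fun n => by
    rw [ZMod.natCast_mod, Nat.cast_pow]
  apply lucas_primality p (a : ZMod p)
  · rw [key, ← powModAux_eq 100 a (p - 1) p hlt, h1, Nat.cast_one]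
  · intro q hq hdvd
    have hqL : q ∈ L := by
      have : q ∣ L.prod := hprod ▸ hdvd
      obtain ⟨l, hl, hql⟩ := (Nat.Prime.prime hq).dvd_prod_iff.mp this
      rwa [(Nat.prime_dvd_prime_iff_eq hq (hL l hl)).mp hql]
    intro hcon
    rw [key] at hcon
    have hebound : (p - 1) / q < 2 ^ 100 := lt_of_le_of_lt (Nat.div_le_self _ _) hlt
    have hr : a ^ ((p - 1) / q) % p = 1 := by
      have h := congrArg ZMod.val hcon
      rwa [ZMod.val_natCast_of_lt (Nat.mod_lt _ (by omega)), ZMod.val_one] at h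
    exact h2 q hqL (by rw [powModAux_eq 100 a _ p hebound, hr])


theorem prime_aux1 : Nat.Prime 8959562077 := by
  apply prime_of_cert 8959562077 2 (by norm_num) [2, 2, 3, 7789, 95857] (by norm_num)
  · intro q hq
    fin_cases hq
    · norm_num
    · norm_num
    · norm_num
    · norm_num
    · norm_num
  · decide
  · decide
  · decide


theorem chain0 : Nat.Prime 90616211958465842219 := by
  apply prime_of_cert 90616211958465842219 2 (by norm_num) [2, 29, 97, 653, 2753, 8959562077] (by norm_num)
  · intro q hq
    fin_cases hq
    · norm_num
    · norm_num
    · norm_num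
    · norm_num
    · norm_num
    · exact prime_aux1
  · decide
  · decide
  · decide


theorem chain1 : Nat.Prime 181232423916931684439 := by
  apply prime_of_cert 181232423916931684439 7 (by norm_num) [2, 90616211958465842219] (by norm_num)
  · intro q hq
    fin_cases hq
    · norm_num
    · exact chain0
  · decide
  · decide
  · decide


theorem chain2 : Nat.Prime 362464847833863368879 := by
  apply prime_of_cert 362464847833863368879 17 (by norm_num) [2, 181232423916931684439] (by norm_num)
  · intro q hq
    fin_cases hq
    · norm_num
    · exact chain1
  · decide
  · decide
  · decide


theorem chain3 : Nat.Prime 724929695667726737759 := by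
  apply prime_of_cert 724929695667726737759 7 (by norm_num) [2, 362464847833863368879] (by norm_num)
  · intro q hq
    fin_cases hq
    · norm_num
    · exact chain2
  · decide
  · decide
  · decide


theorem chain4 : Nat.Prime 1449859391335453475519 := by
  apply prime_of_cert 1449859391335453475519 7 (by norm_num) [2, 724929695667726737759] (by norm_num)
  · intro q hq
    fin_cases hq
    · norm_num
    · exact chain3
  · decide
  · decide
  · decide


theorem chain5 : Nat.Prime 2899718782670906951039 := by
  apply prime_of_cert 2899718782670906951039 31 (by norm_num) [2, 1449859391335453475519] (by norm_num)
  · intro q hq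
    fin_cases hq
    · norm_num
    · exact chain4
  · decide
  · decide
  · decide


theorem chain6 : Nat.Prime 5799437565341813902079 := by
  apply prime_of_cert 5799437565341813902079 7 (by norm_num) [2, 2899718782670906951039] (by norm_num)
  · intro q hq
    fin_cases hq
    · norm_num
    · exact chain5
  · decide
  · decide
  · decide


theorem chain7 : Nat.Prime 11598875130683627804159 := by
  apply prime_of_cert 11598875130683627804159 7 (by norm_num) [2, 5799437565341813902079] (by norm_num)
  · intro q hq
    fin_cases hq
    · norm_num
    · exact chain6
  · decide
  · decide
  · decide


theorem chain8 : Nat.Prime 23197750261367255608319 := by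
  apply prime_of_cert 23197750261367255608319 29 (by norm_num) [2, 11598875130683627804159] (by norm_num)
  · intro q hq
    fin_cases hq
    · norm_num
    · exact chain7
  · decide
  · decide
  · decide


theorem chain9 : Nat.Prime 46395500522734511216639 := by
  apply prime_of_cert 46395500522734511216639 7 (by norm_num) [2, 23197750261367255608319] (by norm_num)
  · intro q hq
    fin_cases hq
    · norm_num
    · exact chain8
  · decide
  · decide
  · decide


theorem chain10 : Nat.Prime 92791001045469022433279 := by
  apply prime_of_cert 92791001045469022433279 7 (by norm_num) [2, 46395500522734511216639] (by norm_num)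
  · intro q hq
    fin_cases hq
    · norm_num
    · exact chain9
  · decide
  · decide
  · decide


theorem chain11 : Nat.Prime 185582002090938044866559 := by
  apply prime_of_cert 185582002090938044866559 17 (by norm_num) [2, 92791001045469022433279] (by norm_num)
  · intro q hq
    fin_cases hq
    · norm_num
    · exact chain10
  · decide
  · decide
  · decide


theorem chain12 : Nat.Prime 371164004181876089733119 := by
  apply prime_of_cert 371164004181876089733119 7 (by norm_num) [2, 185582002090938044866559] (by norm_num)
  · intro q hq
    fin_cases hq
    · norm_num
    · exact chain11
  · decide
  · decide
  · decide


theorem chain13 : Nat.Prime 742328008363752179466239 := by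
  apply prime_of_cert 742328008363752179466239 7 (by norm_num) [2, 371164004181876089733119] (by norm_num)
  · intro q hq
    fin_cases hq
    · norm_num
    · exact chain12
  · decide
  · decide
  · decide


theorem chain14 : Nat.Prime 1484656016727504358932479 := by
  apply prime_of_cert 1484656016727504358932479 17 (by norm_num) [2, 742328008363752179466239] (by norm_num)
  · intro q hq
    fin_cases hq
    · norm_num
    · exact chain13
  · decide
  · decide
  · decide


/-- `p = 90616211958465842219` starts a Cunningham chain of the first kind of
length 15: `2^i·(p+1) - 1` is prime for `i = 0, …, 14`. -/
theorem cunningham_chain_length_15 :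
    ∀ i < 15, Nat.Prime (2 ^ i * (90616211958465842219 + 1) - 1) := by
  intro i hi
  interval_cases i
  · exact chain0
  · exact chain1
  · exact chain2
  · exact chain3
  · exact chain4
  · exact chain5
  · exact chain6
  · exact chain7
  · exact chain8
  · exact chain9
  · exact chain10
  · exact chain11
  · exact chain12
  · exact chain13
  · exact chain14
end
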